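/- For every β ∈ (0,1) there exists R₀ > 0 such that for all λ > 0 and all Γ_C, Γ_N > 0 with Γ_N/Γ_C ≥ R₀ the following holds. Set σ = (Γ_C/Γ_N)², define G(c₂) = 4Γ_C² β^{2λc₂−1}/λ² + 4Γ_N² (1 − β^{2λc₂−1}) c₂²/(2λc₂ − 1) for c₂ with 0 < 2λc₂ < 1, and let G* = inf of G over {c₂ : 0 < 2λc₂ < 1}. Then G* ≥ (4Γ_C²/(λ²β)) · β^{8σ/β} and G* ≤ (4Γ_C²/(λ²β)) · β^{σ} · (1 + σ·log(1/β)/4). In particular G* is strictly smaller than 4Γ_C²/(λ²β), the bound obtained from using the clean data alone. -/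

import Mathlib

/-!
After the substitution `x = 2λc₂` and `σ = (Γ_C/Γ_N)²`, `G = (4Γ_C²/λ²) · g(x)` with
`g(x) = β^{x-1} + (β^{x-1} - 1) x² / (4σ(1-x))`, and every estimate reduces to the tangent-line
bound `β^a - β^b ≤ (a - b) log β · β^a` for the convex function `t ↦ β^t`.

Lower bound, with `s = 8σ/β`: for `x ≤ s` the first term of `g` alone is at least `β^{s-1}`.
For `x > s` it falls short of `β^{s-1}` by at most `(x - s) log(1/β)/β`, while the second term is
at least `x² log(1/β)/(4σ)`; the latter wins because `βx² - 4σx + 32σ²/β > 0`. Upper bound: evaluate `g` at `x = σ`. Strictness: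
`β^σ (1 + v/4) < β^σ (1 + v) ≤ 1` for `v = σ log(1/β) > 0`.
-/

open Real Set

namespace Real

theorem rpow_sub_rpow_le_mul_log {β : ℝ} (hβ : 0 < β) (a b : ℝ) :
    β ^ a - β ^ b ≤ (a - b) * log β * β ^ a := by
  have htangent := add_one_le_exp ((b - a) * log β)
  have hsplit : β ^ b = exp ((b - a) * log β) * β ^ a := by
    rw [rpow_def_of_pos hβ, rpow_def_of_pos hβ, ← exp_add]
    ring_nf
  rw [hsplit]
  nlinarith [rpow_pos_of_pos hβ a]

end Real

/-- The regret constant `G(c₂)` divided by `4Γ_C²/λ²`, as a function of `x = 2λc₂`,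
where `σ = (Γ_C/Γ_N)²`. -/
noncomputable def normalizedRegret (β σ x : ℝ) : ℝ :=
  β ^ (x - 1) + (β ^ (x - 1) - 1) * x ^ 2 / (4 * σ * (1 - x))

theorem regret_eq_mul_normalizedRegret {β ΓC ΓN lam c2 : ℝ} (hlam : 0 < lam) (hC : 0 < ΓC)
    (hc2 : 2 * lam * c2 < 1) :
    4 * ΓC ^ 2 * β ^ (2 * lam * c2 - 1) / lam ^ 2 +
        4 * ΓN ^ 2 * (1 - β ^ (2 * lam * c2 - 1)) * c2 ^ 2 / (2 * lam * c2 - 1) =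
      4 * ΓC ^ 2 / lam ^ 2 * normalizedRegret β ((ΓC / ΓN) ^ 2) (2 * lam * c2) := by
  have h1 : 2 * lam * c2 - 1 ≠ 0 := by linarith
  have h2 : 1 - 2 * lam * c2 ≠ 0 := by linarith
  unfold normalizedRegret
  field_simp
  ring

theorem rpow_add_log_inv_mul_sq_div_le_normalizedRegret {β σ x : ℝ} (hβ : 0 < β) (hσ : 0 < σ)
    (hx : x ∈ Ioo 0 1) :
    β ^ (x - 1) + log β⁻¹ * x ^ 2 / (4 * σ) ≤ normalizedRegret β σ x := by
  obtain ⟨hx0, hx1⟩ := hx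
  have htangent := rpow_sub_rpow_le_mul_log hβ 0 (x - 1)
  rw [rpow_zero, mul_one] at htangent
  unfold normalizedRegret
  gcongr β ^ (x - 1) + ?_
  rw [div_le_div_iff₀ (by positivity) (by nlinarith), log_inv]
  have hx2 : 0 < x ^ 2 * (4 * σ) := by positivity
  nlinarith

theorem rpow_le_normalizedRegret {β σ x : ℝ} (hβ : β ∈ Ioo 0 1) (hσ : 0 < σ)
    (hx : x ∈ Ioo 0 1) : β ^ (8 * σ / β - 1) ≤ normalizedRegret β σ x := by
  obtain ⟨hβ0, hβ1⟩ := hβ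
  set s := 8 * σ / β with hs
  have hL : 0 < log β⁻¹ := log_pos (one_lt_inv_iff₀.mpr ⟨hβ0, hβ1⟩)
  have hgain := rpow_add_log_inv_mul_sq_div_le_normalizedRegret hβ0 hσ hx
  rcases le_or_gt x s with hxs | hsx
  · have hmono : β ^ (s - 1) ≤ β ^ (x - 1) :=
      rpow_le_rpow_of_exponent_ge hβ0 hβ1.le (by linarith)
    have : 0 ≤ log β⁻¹ * x ^ 2 / (4 * σ) := by positivity
    linarith
  · have hdrop : β ^ (s - 1) - β ^ (x - 1) ≤ log β⁻¹ * ((x - s) / β) := by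
      have hβs : β ^ s ≤ 1 := rpow_le_one hβ0.le hβ1.le (by positivity)
      calc β ^ (s - 1) - β ^ (x - 1) ≤ (s - 1 - (x - 1)) * log β * β ^ (s - 1) :=
            rpow_sub_rpow_le_mul_log hβ0 _ _
        _ = log β⁻¹ * ((x - s) / β) * β ^ s := by rw [rpow_sub_one hβ0.ne', log_inv]; ring
        _ ≤ log β⁻¹ * ((x - s) / β) :=
            mul_le_of_le_one_right (mul_nonneg hL.le (div_nonneg (by linarith) hβ0.le)) hβs
    -- `βx² - 4σx + 4σs = (βx - 2σ)²/β + 28σ²/β` is positive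
    have hquad : (x - s) / β ≤ x ^ 2 / (4 * σ) := by
      rw [div_le_div_iff₀ hβ0 (by positivity), hs]
      have : 8 * σ / β * β = 8 * σ := div_mul_cancel₀ _ hβ0.ne'
      nlinarith [sq_nonneg (β * x - 2 * σ)]
    calc β ^ (s - 1) ≤ β ^ (x - 1) + log β⁻¹ * ((x - s) / β) := by linarith
      _ ≤ β ^ (x - 1) + log β⁻¹ * (x ^ 2 / (4 * σ)) := by gcongr
      _ ≤ _ := by rwa [← mul_div_assoc]

theorem normalizedRegret_self_le {β σ : ℝ} (hβ : 0 < β) (hσ : σ ∈ Ioo 0 1) :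
    normalizedRegret β σ σ ≤ β ^ (σ - 1) * (1 + σ * log β⁻¹ / 4) := by
  obtain ⟨hσ0, hσ1⟩ := hσ
  have htangent := rpow_sub_rpow_le_mul_log hβ (σ - 1) 0
  rw [rpow_zero, sub_zero] at htangent
  have hslope : (β ^ (σ - 1) - 1) / (1 - σ) ≤ log β⁻¹ * β ^ (σ - 1) := by
    rw [div_le_iff₀ (by linarith), log_inv]
    linarith
  calc normalizedRegret β σ σ = β ^ (σ - 1) + (β ^ (σ - 1) - 1) / (1 - σ) * (σ / 4) := by
        have : 1 - σ ≠ 0 := by linarith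
        unfold normalizedRegret
        field_simp
    _ ≤ β ^ (σ - 1) + log β⁻¹ * β ^ (σ - 1) * (σ / 4) := by gcongr
    _ = _ := by ring

theorem rpow_mul_one_add_mul_log_div_four_lt_one {β σ : ℝ} (hβ : β ∈ Ioo 0 1) (hσ : 0 < σ) :
    β ^ σ * (1 + σ * log β⁻¹ / 4) < 1 := by
  obtain ⟨hβ0, hβ1⟩ := hβ
  have hv : 0 < σ * log β⁻¹ :=
    mul_pos hσ (log_pos (one_lt_inv_iff₀.mpr ⟨hβ0, hβ1⟩))
  have htangent := rpow_sub_rpow_le_mul_log hβ0 0 (-σ)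
  rw [rpow_zero, rpow_neg hβ0.le] at htangent
  calc β ^ σ * (1 + σ * log β⁻¹ / 4) < β ^ σ * (1 + σ * log β⁻¹) := by
        gcongr
        linarith
    _ ≤ β ^ σ * (β ^ σ)⁻¹ := by
        gcongr
        rw [log_inv]
        linarith
    _ = 1 := mul_inv_cancel₀ (rpow_pos_of_pos hβ0 σ).ne'

theorem csInf_image_bounds {α γ : Type*} [ConditionallyCompleteLattice γ] {f : α → γ}
    {s : Set α} {a b c : γ} {x : α} (hx : x ∈ s) (ha : ∀ y ∈ s, a ≤ f y) (hb : f x ≤ b)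
    (hbc : b < c) : a ≤ sInf (f '' s) ∧ sInf (f '' s) ≤ b ∧ sInf (f '' s) < c := by
  have hle : sInf (f '' s) ≤ b :=
    (csInf_le ⟨a, forall_mem_image.mpr ha⟩ (mem_image_of_mem f hx)).trans hb
  exact ⟨le_csInf ⟨f x, mem_image_of_mem f hx⟩ (forall_mem_image.mpr ha), hle, hle.trans_lt hbc⟩

/-- Bounds on the optimized regret constant for the clean-first order (Lemma on
large noise ratio): for a sufficiently large ratio `Γ_N/Γ_C`, with
`σ = (Γ_C/Γ_N)²`, the infimum `G*` of
`G(c₂) = 4Γ_C²β^{2λc₂−1}/λ² + 4Γ_N²(1−β^{2λc₂−1})c₂²/(2λc₂−1)` over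
`{c₂ : 0 < 2λc₂ < 1}` satisfies
`(4Γ_C²/(λ²β))·β^{8σ/β} ≤ G* ≤ (4Γ_C²/(λ²β))·β^{σ}·(1 + σ log(1/β)/4)`, and in
particular `G* < 4Γ_C²/(λ²β)`, the bound from using the clean data alone. -/
theorem statement_18 (β : ℝ) (hβ : β ∈ Set.Ioo (0 : ℝ) 1) :
    ∃ R0 : ℝ, 0 < R0 ∧
      ∀ lam ΓC ΓN : ℝ, 0 < lam → 0 < ΓC → 0 < ΓN → R0 ≤ ΓN / ΓC →
        (4 * ΓC ^ 2 / (lam ^ 2 * β)) * β ^ (8 * (ΓC / ΓN) ^ 2 / β) ≤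
          sInf ((fun c2 : ℝ =>
              4 * ΓC ^ 2 * β ^ (2 * lam * c2 - 1) / lam ^ 2 +
                4 * ΓN ^ 2 * (1 - β ^ (2 * lam * c2 - 1)) * c2 ^ 2 / (2 * lam * c2 - 1)) ''
            {c2 : ℝ | 0 < 2 * lam * c2 ∧ 2 * lam * c2 < 1}) ∧
        sInf ((fun c2 : ℝ =>
              4 * ΓC ^ 2 * β ^ (2 * lam * c2 - 1) / lam ^ 2 +
                4 * ΓN ^ 2 * (1 - β ^ (2 * lam * c2 - 1)) * c2 ^ 2 / (2 * lam * c2 - 1)) ''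
            {c2 : ℝ | 0 < 2 * lam * c2 ∧ 2 * lam * c2 < 1}) ≤
          (4 * ΓC ^ 2 / (lam ^ 2 * β)) * β ^ ((ΓC / ΓN) ^ 2) *
            (1 + (ΓC / ΓN) ^ 2 * Real.log (1 / β) / 4) ∧
        sInf ((fun c2 : ℝ =>
              4 * ΓC ^ 2 * β ^ (2 * lam * c2 - 1) / lam ^ 2 +
                4 * ΓN ^ 2 * (1 - β ^ (2 * lam * c2 - 1)) * c2 ^ 2 / (2 * lam * c2 - 1)) ''
            {c2 : ℝ | 0 < 2 * lam * c2 ∧ 2 * lam * c2 < 1}) <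
          4 * ΓC ^ 2 / (lam ^ 2 * β) := by
  refine ⟨2, two_pos, fun lam ΓC ΓN hlam hC hN hR => ?_⟩
  rw [one_div]
  set σ := (ΓC / ΓN) ^ 2
  have hσ : σ ∈ Ioo 0 1 := by
    have : ΓC / ΓN ≤ 1 / 2 := by
      rw [le_div_iff₀ hC] at hR
      rw [div_le_iff₀ hN]
      linarith
    exact ⟨by positivity, by nlinarith [div_pos hC hN]⟩
  have hopt : 2 * lam * (σ / (2 * lam)) = σ := by field_simp
  refine csInf_image_bounds (x := σ / (2 * lam)) (by rwa [mem_ofPred_eq, hopt]) ?_ ?_ ?_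
  · rintro c2 ⟨h0, h1⟩
    rw [regret_eq_mul_normalizedRegret hlam hC h1]
    calc _ = 4 * ΓC ^ 2 / lam ^ 2 * β ^ (8 * σ / β - 1) := by
          rw [rpow_sub_one hβ.1.ne']
          ring
      _ ≤ _ := by gcongr; exact rpow_le_normalizedRegret hβ hσ.1 ⟨h0, h1⟩
  · rw [regret_eq_mul_normalizedRegret hlam hC (by rw [hopt]; exact hσ.2), hopt]
    calc _ ≤ 4 * ΓC ^ 2 / lam ^ 2 * (β ^ (σ - 1) * (1 + σ * log β⁻¹ / 4)) := by
          gcongr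
          exact normalizedRegret_self_le hβ.1 hσ
      _ = _ := by
          rw [rpow_sub_one hβ.1.ne']
          ring
  · rw [mul_assoc]
    exact mul_lt_of_lt_one_right (by have := hβ.1; positivity)
      (rpow_mul_one_add_mul_log_div_four_lt_one hβ hσ.1)
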